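/- Let (ν_n)_{n≥0} and ν be Borel measures on (0,∞) satisfying ∫ (1 ∧ u²) ν_n(du) < ∞ and ∫ (1 ∧ u²) ν(du) < ∞, let b ≥ 0 and K ∈ ℝ. Assume that the finite measures (1 ∧ u²)·ν_n on [0,∞) converge weakly to the finite measure (1 ∧ u²)·ν + b²·δ_0, where δ_0 is the Dirac mass at 0. Let (g_n)_{n≥0} and g be continuous bounded functions from (0,∞) to ℝ such that g(u)/u² → K as u → 0+, and such that the functions u ↦ g_n(u)/(1 ∧ u²) converge uniformly on (0,∞) to u ↦ g(u)/(1 ∧ u²). Then ∫ g_n dν_n → ∫ g dν + K·b² as n → ∞. -/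

import Mathlib

/-!
Write `w u = min 1 (u ^ 2)` and `μₙ = w • νₙ`, so that `∫ gₙ dνₙ = ∫ gₙ / w dμₙ`. The function
`h` equal to `glim / w` on `(0, ∞)` and to `K` on `(-∞, 0]` is continuous (this is where
`glim u / u² → K` enters) and bounded, so weak convergence gives
`∫ h dμₙ → ∫ h d(w • νlim + b² δ₀) = ∫ glim dνlim + K b²`. Since `gₙ / w → h` uniformly on
`(0, ∞)`, which carries every `μₙ`, and the total masses `μₙ ℝ` converge, hence stay bounded,
`∫ (gₙ / w - h) dμₙ → 0`.
-/

open MeasureTheory Filter Set Topology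

lemma continuous_ite_le_of_tendsto {f : ℝ → ℝ} {a K : ℝ} (hf : ContinuousOn f (Ioi a))
    (hK : Tendsto f (𝓝[>] a) (𝓝 K)) : Continuous fun u => if u ≤ a then K else f u := by
  classical
  have hupdate : ContinuousOn (Function.update f a K) (Ici a) := by
    intro x hx
    rcases (mem_Ici.mp hx).eq_or_lt with rfl | hx
    · rwa [continuousWithinAt_update_same, Ici_sdiff_left]
    · refine ((hf.continuousAt (Ioi_mem_nhds hx)).congr ?_).continuousWithinAt
      filter_upwards [eventually_ne_nhds hx.ne'] with u hu
      rw [Function.update_of_ne hu]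
  refine (continuous_if_le (f' := fun _ => K) continuous_id continuous_const continuousOn_const
    hupdate fun x hx => by simp [show x = a from hx]).congr fun u => ?_
  by_cases hu : u ≤ a
  · simp [hu]
  · simp [hu, Function.update_of_ne (ne_of_not_le hu)]

lemma tendsto_integral_sub_integral_of_tendstoUniformlyOn {ι α : Type*} [MeasurableSpace α]
    {l : Filter ι} {μ : ι → Measure α} [∀ i, IsFiniteMeasure (μ i)] {s : Set α}
    {F : ι → α → ℝ} {H : α → ℝ} (hs : ∀ i, ∀ᵐ x ∂μ i, x ∈ s)
    (hmass : IsBoundedUnder (· ≤ ·) l fun i => (μ i).real univ)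
    (hF : ∀ i, AEStronglyMeasurable (F i) (μ i)) (hH : ∀ i, Integrable H (μ i))
    (hunif : TendstoUniformlyOn F H l s) :
    Tendsto (fun i => ∫ x, F i x ∂μ i - ∫ x, H x ∂μ i) l (𝓝 0) := by
  obtain ⟨M, hM⟩ := hmass
  rw [NormedAddGroup.tendsto_nhds_zero]
  intro ε hε
  set δ := ε / (|M| + 1)
  have hδ : 0 < δ := by positivity
  filter_upwards [eventually_map.mp hM, Metric.tendstoUniformlyOn_iff.mp hunif δ hδ]
    with i hMi hclose
  have hclose' : ∀ᵐ x ∂μ i, ‖F i x - H x‖ ≤ δ := by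
    filter_upwards [hs i] with x hx
    rw [← dist_eq_norm, dist_comm]
    exact (hclose x hx).le
  have hFi : Integrable (F i) (μ i) :=
    (hH i).add (Integrable.of_bound ((hF i).sub (hH i).aestronglyMeasurable) δ hclose') |>.congr
      (ae_of_all _ fun x => add_sub_cancel (H x) (F i x))
  calc ‖∫ x, F i x ∂μ i - ∫ x, H x ∂μ i‖ = ‖∫ x, F i x - H x ∂μ i‖ := by
        rw [integral_sub hFi (hH i)]
    _ ≤ δ * (μ i).real univ := norm_integral_le_of_norm_le_const hclose'
    _ ≤ δ * |M| := by gcongr; exact hMi.trans (le_abs_self M)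
    _ < δ * (|M| + 1) := by gcongr; linarith
    _ = ε := div_mul_cancel₀ ε (by positivity)

lemma min_one_sq_pos {u : ℝ} (hu : 0 < u) : 0 < min 1 (u ^ 2) :=
  lt_min one_pos (by positivity)

lemma ContinuousOn.div_min_one_sq {g : ℝ → ℝ} (hg : ContinuousOn g (Ioi 0)) :
    ContinuousOn (fun u => g u / min 1 (u ^ 2)) (Ioi 0) :=
  hg.div (continuous_const.min (continuous_pow 2)).continuousOn
    fun _ hu => (min_one_sq_pos hu).ne'

lemma tendsto_div_min_one_sq_nhdsGT {g : ℝ → ℝ} {K : ℝ}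
    (hK : Tendsto (fun u => g u / u ^ 2) (𝓝[>] 0) (𝓝 K)) :
    Tendsto (fun u => g u / min 1 (u ^ 2)) (𝓝[>] 0) (𝓝 K) := by
  refine hK.congr' ?_
  filter_upwards [Ioo_mem_nhdsGT one_pos] with u hu
  rw [min_eq_right (pow_le_one₀ hu.1.le hu.2.le)]

noncomputable def extendDivMinOneSq (K : ℝ) (g : ℝ → ℝ) (u : ℝ) : ℝ :=
  if u ≤ 0 then K else g u / min 1 (u ^ 2)

section extendDivMinOneSq

variable {K : ℝ} {g : ℝ → ℝ}

lemma extendDivMinOneSq_of_nonpos {u : ℝ} (hu : u ≤ 0) : extendDivMinOneSq K g u = K :=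
  if_pos hu

lemma extendDivMinOneSq_of_pos {u : ℝ} (hu : 0 < u) :
    extendDivMinOneSq K g u = g u / min 1 (u ^ 2) :=
  if_neg hu.not_ge

lemma continuous_extendDivMinOneSq (hg : ContinuousOn g (Ioi 0))
    (hK : Tendsto (fun u => g u / u ^ 2) (𝓝[>] 0) (𝓝 K)) :
    Continuous (extendDivMinOneSq K g) :=
  continuous_ite_le_of_tendsto hg.div_min_one_sq (tendsto_div_min_one_sq_nhdsGT hK)

lemma exists_abs_extendDivMinOneSq_le (hcont : Continuous (extendDivMinOneSq K g)) {C : ℝ}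
    (hC : ∀ u ∈ Ioi 0, |g u| ≤ C) : ∃ M, ∀ u, |extendDivMinOneSq K g u| ≤ M := by
  obtain ⟨M, hM⟩ := (isCompact_Icc (a := (0 : ℝ)) (b := 1)).exists_bound_of_continuousOn
    hcont.continuousOn
  refine ⟨max M (max |K| C), fun u => ?_⟩
  rcases le_or_gt u 0 with hu | hu
  · rw [extendDivMinOneSq_of_nonpos hu]
    exact le_max_of_le_right (le_max_left _ _)
  rcases le_or_gt u 1 with hu1 | hu1
  · exact le_max_of_le_left (hM u ⟨hu.le, hu1⟩)
  · rw [extendDivMinOneSq_of_pos hu, min_eq_left (one_le_pow₀ hu1.le), div_one]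
    exact le_max_of_le_right (le_max_of_le_right (hC u hu))

lemma integrable_extendDivMinOneSq (hcont : Continuous (extendDivMinOneSq K g)) {M : ℝ}
    (hM : ∀ u, |extendDivMinOneSq K g u| ≤ M) (μ : Measure ℝ) [IsFiniteMeasure μ] :
    Integrable (extendDivMinOneSq K g) μ :=
  .of_bound hcont.aestronglyMeasurable M (ae_of_all _ hM)

end extendDivMinOneSq

lemma ae_gt_of_measure_Iic_eq_zero {μ : Measure ℝ} {a : ℝ} (hμ : μ (Iic a) = 0) :
    ∀ᵐ u ∂μ, a < u :=
  (measure_eq_zero_iff_ae_notMem.mp hμ).mono fun _ hu => not_le.mp hu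

lemma integral_withDensity_min_one_sq (μ : Measure ℝ) (F : ℝ → ℝ) :
    ∫ u, F u ∂μ.withDensity (fun u => ENNReal.ofReal (min 1 (u ^ 2)))
      = ∫ u, min 1 (u ^ 2) * F u ∂μ := by
  rw [integral_withDensity_eq_integral_toReal_smul
    (continuous_const.min (continuous_pow 2)).measurable.ennreal_ofReal
    (ae_of_all _ fun _ => ENNReal.ofReal_lt_top)]
  simp_rw [ENNReal.toReal_ofReal (le_min zero_le_one (sq_nonneg _)), smul_eq_mul]

lemma integral_div_min_one_sq_withDensity {μ : Measure ℝ} (hμ : μ (Iic 0) = 0) (G : ℝ → ℝ) :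
    ∫ u, G u / min 1 (u ^ 2) ∂μ.withDensity (fun u => ENNReal.ofReal (min 1 (u ^ 2)))
      = ∫ u, G u ∂μ := by
  rw [integral_withDensity_min_one_sq]
  refine integral_congr_ae ?_
  filter_upwards [ae_gt_of_measure_Iic_eq_zero hμ] with u hu
  exact mul_div_cancel₀ _ (min_one_sq_pos hu).ne'

lemma integral_extendDivMinOneSq_withDensity_add_dirac {K : ℝ} {g : ℝ → ℝ} {ν : Measure ℝ}
    (hν : ν (Iic 0) = 0) (hνfin : ∫⁻ u, ENNReal.ofReal (min 1 (u ^ 2)) ∂ν ≠ ⊤)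
    (hcont : Continuous (extendDivMinOneSq K g)) {M : ℝ}
    (hM : ∀ u, |extendDivMinOneSq K g u| ≤ M) (b : ℝ) :
    ∫ u, extendDivMinOneSq K g u
        ∂(ν.withDensity (fun u => ENNReal.ofReal (min 1 (u ^ 2)))
          + ENNReal.ofReal (b ^ 2) • Measure.dirac 0)
      = ∫ u, g u ∂ν + K * b ^ 2 := by
  have := isFiniteMeasure_withDensity hνfin
  rw [integral_add_measure (integrable_extendDivMinOneSq hcont hM _)
      ((integrable_extendDivMinOneSq hcont hM _).smul_measure ENNReal.ofReal_ne_top),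
    integral_smul_measure, integral_dirac, extendDivMinOneSq_of_nonpos le_rfl,
    ENNReal.toReal_ofReal (sq_nonneg b), smul_eq_mul, mul_comm (b ^ 2),
    ← integral_div_min_one_sq_withDensity hν g]
  congr 1
  refine integral_congr_ae ?_
  filter_upwards [(withDensity_absolutelyContinuous _ _).ae_le (ae_gt_of_measure_Iic_eq_zero hν)]
    with u hu using extendDivMinOneSq_of_pos hu

theorem tendsto_integral_levy_measures_general
    (ν : ℕ → Measure ℝ) (νlim : Measure ℝ) (b K : ℝ)
    (hνsupp : ∀ n, ν n (Iic (0:ℝ)) = 0) (hνlimsupp : νlim (Iic (0:ℝ)) = 0)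
    (hνfin : ∀ n, (∫⁻ u, ENNReal.ofReal (min 1 (u ^ 2)) ∂(ν n)) < ⊤)
    (hνlimfin : (∫⁻ u, ENNReal.ofReal (min 1 (u ^ 2)) ∂νlim) < ⊤)
    (hweak : ∀ f : ℝ → ℝ, Continuous f → (∃ C : ℝ, ∀ x, |f x| ≤ C) →
      Tendsto
        (fun n => ∫ u, f u ∂((ν n).withDensity fun u => ENNReal.ofReal (min 1 (u ^ 2))))
        atTop
        (nhds (∫ u, f u
          ∂(νlim.withDensity (fun u => ENNReal.ofReal (min 1 (u ^ 2)))
            + (ENNReal.ofReal (b ^ 2)) • Measure.dirac (0:ℝ)))))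
    (g : ℕ → ℝ → ℝ) (glim : ℝ → ℝ)
    (hgcont : ∀ n, ContinuousOn (g n) (Ioi (0:ℝ))) (hglimcont : ContinuousOn glim (Ioi (0:ℝ)))
    (hglimbdd : ∃ C : ℝ, ∀ u ∈ Ioi (0:ℝ), |glim u| ≤ C)
    (hK : Tendsto (fun u => glim u / u ^ 2) (nhdsWithin 0 (Ioi 0)) (nhds K))
    (hunif : TendstoUniformlyOn (fun n u => g n u / min 1 (u ^ 2))
      (fun u => glim u / min 1 (u ^ 2)) atTop (Ioi (0:ℝ))) :
    Tendsto (fun n => ∫ u, g n u ∂(ν n)) atTop (nhds ((∫ u, glim u ∂νlim) + K * b ^ 2)) := by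
  obtain ⟨C, hC⟩ := hglimbdd
  have hcont := continuous_extendDivMinOneSq hglimcont hK
  obtain ⟨M, hM⟩ := exists_abs_extendDivMinOneSq_le hcont hC
  have := fun n => isFiniteMeasure_withDensity (hνfin n).ne
  have hsupp n : ∀ᵐ u ∂(ν n).withDensity fun u => ENNReal.ofReal (min 1 (u ^ 2)), u ∈ Ioi 0 :=
    (withDensity_absolutelyContinuous (ν n) _).ae_le
      (ae_gt_of_measure_Iic_eq_zero (hνsupp n))
  have hlim := hweak _ hcont ⟨M, hM⟩
  rw [integral_extendDivMinOneSq_withDensity_add_dirac hνlimsupp hνlimfin.ne hcont hM] at hlim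
  have hmass := hweak (fun _ => 1) continuous_const ⟨1, fun _ => by norm_num⟩
  simp only [integral_const, smul_eq_mul, mul_one] at hmass
  have hmeas n : AEStronglyMeasurable (fun u => g n u / min 1 (u ^ 2))
      ((ν n).withDensity fun u => ENNReal.ofReal (min 1 (u ^ 2))) := by
    rw [← Measure.restrict_eq_self_of_ae_mem (hsupp n)]
    exact (hgcont n).div_min_one_sq.aestronglyMeasurable measurableSet_Ioi
  have hdiff := tendsto_integral_sub_integral_of_tendstoUniformlyOn hsupp
    hmass.isBoundedUnder_le hmeas (fun _ => integrable_extendDivMinOneSq hcont hM _)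
    (hunif.congr_right fun _ hu => (extendDivMinOneSq_of_pos hu).symm)
  refine (add_zero (∫ u, glim u ∂νlim + K * b ^ 2) ▸ hlim.add hdiff).congr fun n => ?_
  rw [add_sub_cancel, integral_div_min_one_sq_withDensity (hνsupp n)]

/-- **Proposition A.2.**
Let `(ν_n)` and `ν` be Borel measures on `(0,∞)` (here: measures on `ℝ` giving no mass to
`(-∞,0]`) with `∫ (1 ∧ u²) dν_n < ∞` and `∫ (1 ∧ u²) dν < ∞`, let `b ≥ 0` and `K ∈ ℝ`.
Assume the finite measures `(1 ∧ u²)·ν_n` converge weakly to `(1 ∧ u²)·ν + b²·δ_0`.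
Let `(g_n)` and `g` be continuous bounded functions on `(0,∞)` with `g(u)/u² → K` as
`u → 0+`, such that `u ↦ g_n(u)/(1 ∧ u²)` converges uniformly on `(0,∞)` to
`u ↦ g(u)/(1 ∧ u²)`. Then `∫ g_n dν_n → ∫ g dν + K·b²`. -/
theorem tendsto_integral_levy_measures
    (ν : ℕ → Measure ℝ) (νlim : Measure ℝ) (b K : ℝ) (hb : 0 ≤ b)
    (hνsupp : ∀ n, ν n (Iic (0:ℝ)) = 0) (hνlimsupp : νlim (Iic (0:ℝ)) = 0)
    (hνfin : ∀ n, (∫⁻ u, ENNReal.ofReal (min 1 (u ^ 2)) ∂(ν n)) < ⊤)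
    (hνlimfin : (∫⁻ u, ENNReal.ofReal (min 1 (u ^ 2)) ∂νlim) < ⊤)
    (hweak : ∀ f : ℝ → ℝ, Continuous f → (∃ C : ℝ, ∀ x, |f x| ≤ C) →
      Tendsto
        (fun n => ∫ u, f u ∂((ν n).withDensity fun u => ENNReal.ofReal (min 1 (u ^ 2))))
        atTop
        (nhds (∫ u, f u
          ∂(νlim.withDensity (fun u => ENNReal.ofReal (min 1 (u ^ 2)))
            + (ENNReal.ofReal (b ^ 2)) • Measure.dirac (0:ℝ)))))
    (g : ℕ → ℝ → ℝ) (glim : ℝ → ℝ)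
    (hgcont : ∀ n, ContinuousOn (g n) (Ioi (0:ℝ))) (hglimcont : ContinuousOn glim (Ioi (0:ℝ)))
    (hgbdd : ∀ n, ∃ C : ℝ, ∀ u ∈ Ioi (0:ℝ), |g n u| ≤ C)
    (hglimbdd : ∃ C : ℝ, ∀ u ∈ Ioi (0:ℝ), |glim u| ≤ C)
    (hK : Tendsto (fun u => glim u / u ^ 2) (nhdsWithin 0 (Ioi 0)) (nhds K))
    (hunif : TendstoUniformlyOn (fun n u => g n u / min 1 (u ^ 2))
      (fun u => glim u / min 1 (u ^ 2)) atTop (Ioi (0:ℝ))) :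
    Tendsto (fun n => ∫ u, g n u ∂(ν n)) atTop (nhds ((∫ u, glim u ∂νlim) + K * b ^ 2)) :=
  tendsto_integral_levy_measures_general ν νlim b K hνsupp hνlimsupp hνfin hνlimfin hweak g glim
    hgcont hglimcont hglimbdd hK hunif
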